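/- arXiv:2109.13646 — 2 statements merged into one kernel-verified Lean document; each statement's English description precedes it below -/
import Mathlib

section
/- For any w ∈ S_n, the recording tableau of w equals the insertion tableau of the inverse: Q(w) = P(w⁻¹), and consequently P(w) = Q(w⁻¹). -/
/-- `l` is (the list of parts of) a partition of `n`. -/
def IsPartitionList (n : ℕ) (l : List ℕ) : Prop :=
  l.Chain' (· ≥ ·) ∧ (∀ a ∈ l, 0 < a) ∧ l.sum = n

/-- dominance order on lists of parts, via partial sums. -/
def listDom (a b : List ℕ) : Prop := ∀ i, (b.take i).sum ≤ (a.take i).sum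

/-- number of parts of `l` that are `> c`, i.e. the `(c+1)`-st part of the conjugate. -/
def conjCount (l : List ℕ) (c : ℕ) : ℕ := (l.filter (fun a => c < a)).length

/-- the conjugate partition, as a list. -/
def conjP (l : List ℕ) : List ℕ := (List.range (l.headD 0)).map (conjCount l)

/-- shape of a tableau given as a list of rows. -/
def shape (t : List (List ℕ)) : List ℕ := t.map List.length

/-- `t` is a standard Young tableau with `n` boxes and entries `1,…,n`. -/
def IsStdTableau (n : ℕ) (t : List (List ℕ)) : Prop :=
  t.flatten.Perm ((List.range n).map (· + 1)) ∧
  (∀ r ∈ t, r.Chain' (· < ·)) ∧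
  (∀ i j, j < (t.getD (i + 1) []).length →
      (t.getD i []).getD j 0 < (t.getD (i + 1) []).getD j 0) ∧
  (shape t).Chain' (· ≥ ·) ∧ (∀ r ∈ t, r ≠ [])

/-- the subtableau `t↓ₘ` consisting of the entries `1,…,m`. -/
def restrictTab (t : List (List ℕ)) (m : ℕ) : List (List ℕ) :=
  (t.map (fun r => r.filter (· ≤ m))).filter (fun r => ¬ r = [])

/-- dominance order on standard tableaux with `n` boxes:
`s ⊵ t` iff `Shape(s↓ₖ) ⊵ Shape(t↓ₖ)` for all `1 ≤ k ≤ n`. -/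
def tabDom (n : ℕ) (s t : List (List ℕ)) : Prop :=
  ∀ k, 1 ≤ k → k ≤ n → listDom (shape (restrictTab s k)) (shape (restrictTab t k))

def rowTabAux : ℕ → List ℕ → List (List ℕ)
  | _, [] => []
  | s, a :: as => ((List.range a).map (fun j => s + j + 1)) :: rowTabAux (s + a) as

/-- the initial (row-reading) tableau `t^λ`. -/
def rowTab (l : List ℕ) : List (List ℕ) := rowTabAux 0 l

/-- the column-reading tableau `t_λ`. -/
def colTab (l : List ℕ) : List (List ℕ) :=
  (List.range l.length).map (fun i =>
    (List.range (l.getD i 0)).map (fun j =>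
      ((List.range j).map (conjCount l)).sum + i + 1))

/-- the conjugate (transpose) tableau `t*`. -/
def conjTab (t : List (List ℕ)) : List (List ℕ) :=
  (List.range (t.headD []).length).map (fun j => t.filterMap (fun r => r[j]?))

/-- Schensted insertion of `x` into a row: new row plus optionally bumped entry. -/
def rowInsert : List ℕ → ℕ → List ℕ × Option ℕ
  | [], x => ([x], none)
  | a :: as, x =>
    if a < x then
      let p := rowInsert as x
      (a :: p.1, p.2)
    else (x :: as, some a)

/-- Schensted row-insertion of `x` into a tableau. -/
def insertTab : List (List ℕ) → ℕ → List (List ℕ)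
  | [], x => [[x]]
  | r :: rest, x =>
    match rowInsert r x with
    | (r', none) => r' :: rest
    | (r', some y) => r' :: insertTab rest y

/-- place the entry `k` at the end of row `r` of `q`. -/
def placeAt : List (List ℕ) → ℕ → ℕ → List (List ℕ)
  | [], _, k => [[k]]
  | q :: qs, 0, k => (q ++ [k]) :: qs
  | q :: qs, r + 1, k => q :: placeAt qs r k

/-- index of the row in which the two shapes differ. -/
def diffRow : List ℕ → List ℕ → ℕ
  | _, [] => 0
  | [], _ :: _ => 0
  | a :: as, b :: bs => if a = b then diffRow as bs + 1 else 0

/-- one step of RSK: insert `x` into `P` and record `k` in `Q`. -/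
def RSKstep (pq : List (List ℕ) × List (List ℕ)) (x k : ℕ) :
    List (List ℕ) × List (List ℕ) :=
  let P' := insertTab pq.1 x
  (P', placeAt pq.2 (diffRow (shape pq.1) (shape P')) k)

/-- RSK applied to the sequence `xs` (with recording entries `1, 2, …`). -/
def RSKfold (xs : List ℕ) : List (List ℕ) × List (List ℕ) :=
  (xs.zip (List.range xs.length)).foldl (fun pq p => RSKstep pq p.1 (p.2 + 1)) ([], [])

/-- the RSK insertion tableau `P(w)`. -/
def Ptab {n : ℕ} (w : Equiv.Perm (Fin n)) : List (List ℕ) :=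
  (RSKfold (List.ofFn (fun i => (w i : ℕ) + 1))).1

/-- the RSK recording tableau `Q(w)`. -/
def Qtab {n : ℕ} (w : Equiv.Perm (Fin n)) : List (List ℕ) :=
  (RSKfold (List.ofFn (fun i => (w i : ℕ) + 1))).2

/-- Coxeter length of a permutation = number of inversions. -/
def invCount {n : ℕ} (w : Equiv.Perm (Fin n)) : ℕ :=
  (Finset.univ.filter (fun p : Fin n × Fin n => p.1 < p.2 ∧ w p.2 < w p.1)).card

/-- one step in the Bruhat order: multiply by a reflection, increasing length. -/
def bruhatStep {n : ℕ} (x y : Equiv.Perm (Fin n)) : Prop :=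
  (∃ i j : Fin n, i ≠ j ∧ y = x * Equiv.swap i j) ∧ invCount x < invCount y

/-- strict Bruhat order. -/
def bruhatLT {n : ℕ} (x y : Equiv.Perm (Fin n)) : Prop :=
  Relation.TransGen bruhatStep x y

/-!
Attach to each entry `p` of a two-line array (here `(i, w i)`, for the permutation `w`) its
chain rank: the length of a longest chain of entries ending at `p` that increases in both
coordinates. Schensted's analysis of row insertion shows that, once the first entries have been
inserted, the `t`-th entry of the first row of `P` is the least value of rank `t`, and the `t`-th
entry of the first row of `Q` is the least time of rank `t`. An inserted entry bumps the latest
earlier entry of its own rank, so the bumped values, paired with the times at which they are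
bumped, form the array of pairs `(p₂.1, p₁.2)` for consecutive members `p₁, p₂` of a rank
class; RSK on that array produces the remaining rows of `P` and `Q`.

Chain ranks, rank classes and consecutiveness within a class are invariant under swapping the
two coordinates, which turns the array of `w` into that of `w⁻¹` and exchanges the descriptions
of the first rows of `P` and `Q`. Induction on the length of the array gives `Q(w) = P(w⁻¹)`.
-/

def rsk (S : List (ℕ × ℕ)) : List (List ℕ) × List (List ℕ) :=
  S.foldl (fun pq p => RSKstep pq p.2 p.1) ([], [])

lemma rsk_append (S : List (ℕ × ℕ)) (p : ℕ × ℕ) :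
    rsk (S ++ [p]) = RSKstep (rsk S) p.2 p.1 := by
  rw [rsk, List.foldl_append]
  rfl

def permArray {n : ℕ} (w : Equiv.Perm (Fin n)) : List (ℕ × ℕ) :=
  List.ofFn fun i => ((i : ℕ) + 1, (w i : ℕ) + 1)

lemma RSKfold_eq_rsk_permArray {n : ℕ} (w : Equiv.Perm (Fin n)) :
    RSKfold (List.ofFn fun i => (w i : ℕ) + 1) = rsk (permArray w) := by
  have hzip : ((List.ofFn fun i => (w i : ℕ) + 1).zip (List.range n)).map
      (fun p => (p.2 + 1, p.1)) = permArray w := by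
    apply List.ext_getElem (by simp [permArray])
    intro i _ _
    simp [permArray]
  rw [RSKfold, List.length_ofFn, ← hzip, rsk, List.foldl_map]

lemma Ptab_eq_rsk {n : ℕ} (w : Equiv.Perm (Fin n)) : Ptab w = (rsk (permArray w)).1 := by
  rw [Ptab, RSKfold_eq_rsk_permArray]

lemma Qtab_eq_rsk {n : ℕ} (w : Equiv.Perm (Fin n)) : Qtab w = (rsk (permArray w)).2 := by
  rw [Qtab, RSKfold_eq_rsk_permArray]

lemma pairwise_fst_lt_permArray {n : ℕ} (w : Equiv.Perm (Fin n)) :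
    (permArray w).Pairwise (·.1 < ·.1) := by
  simp only [permArray, List.pairwise_ofFn]
  intro i j hij
  simpa using hij

lemma toFinset_permArray_inv {n : ℕ} (w : Equiv.Perm (Fin n)) :
    (permArray w⁻¹).toFinset = (permArray w).toFinset.image Prod.swap := by
  ext ⟨a, b⟩
  simp only [permArray, List.mem_toFinset, List.mem_ofFn, Finset.mem_image, Prod.exists,
    Prod.swap_prod_mk, Prod.mk.injEq]
  constructor
  · rintro ⟨i, rfl, rfl⟩
    exact ⟨_, _, ⟨w⁻¹ i, rfl, rfl⟩, by simp, rfl⟩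
  · rintro ⟨_, _, ⟨i, rfl, rfl⟩, rfl, rfl⟩
    exact ⟨w i, rfl, by simp⟩

lemma rowInsert_of_forall_lt {r : List ℕ} {x : ℕ} (h : ∀ a ∈ r, a < x) :
    rowInsert r x = (r ++ [x], none) := by
  induction r with
  | nil => rfl
  | cons a r ih =>
    rw [rowInsert, if_pos (h a (by simp)), ih fun b hb => h b (by simp [hb])]
    rfl

lemma rowInsert_eq_set {r : List ℕ} {x k : ℕ} (hk : k < r.length)
    (hlt : ∀ i (hi : i < k), r[i] < x) (hge : x ≤ r[k]) :
    rowInsert r x = (r.set k x, some r[k]) := by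
  induction r generalizing k with
  | nil => simp at hk
  | cons a r ih =>
    cases k with
    | zero =>
      rw [rowInsert, if_neg (by simpa using hge)]
      rfl
    | succ k =>
      rw [rowInsert, if_pos (by simpa using hlt 0 (by omega)),
        ih (by simpa using hk) (fun i hi => by simpa using hlt (i + 1) (by omega))
          (by simpa using hge)]
      rfl

lemma length_of_rowInsert_eq_none {r r' : List ℕ} {x : ℕ} (h : rowInsert r x = (r', none)) :
    r'.length = r.length + 1 := by
  induction r generalizing r' with
  | nil => simp [rowInsert] at h; simp [← h]
  | cons a r ih =>
    rw [rowInsert] at h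
    split_ifs at h with ha
    · simp only [Prod.mk.injEq] at h
      obtain ⟨rfl, h⟩ := h
      simp [ih (Prod.ext rfl h)]
    · simp at h

lemma length_of_rowInsert_eq_some {r r' : List ℕ} {x y : ℕ}
    (h : rowInsert r x = (r', some y)) : r'.length = r.length := by
  induction r generalizing r' with
  | nil => simp [rowInsert] at h
  | cons a r ih =>
    rw [rowInsert] at h
    split_ifs at h with ha
    · simp only [Prod.mk.injEq] at h
      obtain ⟨rfl, h⟩ := h
      simp [ih (Prod.ext rfl h)]
    · simp only [Prod.mk.injEq] at h
      simp [← h.1]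

lemma RSKstep_cons_of_rowInsert_eq_none {r r' q : List ℕ} {P Q : List (List ℕ)} {x k : ℕ}
    (h : rowInsert r x = (r', none)) :
    RSKstep (r :: P, q :: Q) x k = (r' :: P, (q ++ [k]) :: Q) := by
  have hlen := length_of_rowInsert_eq_none h
  simp only [RSKstep, insertTab, h, shape, List.map_cons, diffRow, hlen]
  simp [placeAt]

lemma RSKstep_cons_of_rowInsert_eq_some {r r' q : List ℕ} {P Q : List (List ℕ)} {x y k : ℕ}
    (h : rowInsert r x = (r', some y)) :
    RSKstep (r :: P, q :: Q) x k =
      (r' :: (RSKstep (P, Q) y k).1, q :: (RSKstep (P, Q) y k).2) := by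
  have hlen := length_of_rowInsert_eq_some h
  simp only [RSKstep, insertTab, h, shape, List.map_cons, diffRow, hlen]
  simp [placeAt]

section ChainRank

variable {A : Finset (ℕ × ℕ)} {p q : ℕ × ℕ}

def below (A : Finset (ℕ × ℕ)) (p : ℕ × ℕ) : Finset (ℕ × ℕ) :=
  A.filter fun q => q.1 < p.1 ∧ q.2 < p.2

lemma mem_below : q ∈ below A p ↔ q ∈ A ∧ q.1 < p.1 ∧ q.2 < p.2 :=
  Finset.mem_filter

lemma below_subset_below_of_mem (hq : q ∈ below A p) : below A q ⊆ below A p := by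
  intro r hr
  rw [mem_below] at hq hr ⊢
  exact ⟨hr.1, hr.2.1.trans hq.2.1, hr.2.2.trans hq.2.2⟩

/-- The length of a longest chain in `A`, strictly increasing in both coordinates, ending at `p`
(`p` itself is counted, whether or not it lies in `A`). -/
def chainRank (A : Finset (ℕ × ℕ)) (p : ℕ × ℕ) : ℕ :=
  1 + (below A p).attach.sup fun q => chainRank A q
termination_by p.1
decreasing_by exact (mem_below.1 q.2).2.1

lemma chainRank_eq (A : Finset (ℕ × ℕ)) (p : ℕ × ℕ) :
    chainRank A p = 1 + (below A p).sup (chainRank A) := by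
  rw [chainRank, Finset.sup_attach]

lemma one_le_chainRank : 1 ≤ chainRank A p := by
  rw [chainRank_eq]
  omega

lemma chainRank_lt_of_mem_below (hq : q ∈ below A p) : chainRank A q < chainRank A p := by
  rw [chainRank_eq A p]
  have := Finset.le_sup (f := chainRank A) hq
  omega

lemma exists_mem_below_chainRank_eq {s : ℕ} (hs : 1 ≤ s) (hsp : s < chainRank A p) :
    ∃ q ∈ below A p, chainRank A q = s := by
  induction hp : p.1 using Nat.strong_induction_on generalizing p with
  | _ a ih =>
    have hne : (below A p).Nonempty := by
      by_contra h
      rw [Finset.not_nonempty_iff_eq_empty] at h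
      rw [chainRank_eq, h, Finset.sup_empty] at hsp
      exact absurd hsp (by simp only [Nat.bot_eq_zero]; omega)
    obtain ⟨q, hq, hsup⟩ := Finset.exists_mem_eq_sup _ hne (chainRank A)
    have hqp : chainRank A q + 1 = chainRank A p := by rw [chainRank_eq A p, hsup]; omega
    rcases (show s = chainRank A q ∨ s < chainRank A q by omega) with rfl | hlt
    · exact ⟨q, hq, rfl⟩
    · obtain ⟨r, hr, rfl⟩ := ih q.1 (hp ▸ (mem_below.1 hq).2.1) hlt rfl
      exact ⟨r, below_subset_below_of_mem hq hr, rfl⟩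

lemma chainRank_insert_of_fst_lt (hq : q.1 < p.1) : chainRank (insert p A) q = chainRank A q := by
  induction hq' : q.1 using Nat.strong_induction_on generalizing q with
  | _ a ih =>
    have hbelow : below (insert p A) q = below A q := by
      rw [below, Finset.filter_insert, if_neg (by omega), below]
    rw [chainRank_eq, chainRank_eq A, hbelow]
    congr 1
    refine Finset.sup_congr rfl fun r hr => ?_
    have hr1 := (mem_below.1 hr).2.1
    exact ih r.1 (hq' ▸ hr1) (by omega) rfl

lemma chainRank_image_swap (A : Finset (ℕ × ℕ)) (p : ℕ × ℕ) :
    chainRank (A.image Prod.swap) p.swap = chainRank A p := by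
  induction hp : p.2 using Nat.strong_induction_on generalizing p with
  | _ b ih =>
    have hbelow : below (A.image Prod.swap) p.swap = (below A p).image Prod.swap := by
      ext r
      simp only [mem_below, Finset.mem_image]
      constructor
      · rintro ⟨⟨q, hq, rfl⟩, h1, h2⟩
        exact ⟨q, ⟨hq, h2, h1⟩, rfl⟩
      · rintro ⟨q, ⟨hq, h1, h2⟩, rfl⟩
        exact ⟨⟨q, hq, rfl⟩, h2, h1⟩
    rw [chainRank_eq, chainRank_eq A, hbelow, Finset.sup_image]
    congr 1
    refine Finset.sup_congr rfl fun q hq => ih q.2 (hp ▸ (mem_below.1 hq).2.2) q rfl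

lemma snd_lt_of_chainRank_eq (hinj : Set.InjOn Prod.snd (A : Set (ℕ × ℕ))) (hp : p ∈ A)
    (hq : q ∈ A)
    (hrank : chainRank A p = chainRank A q) (h1 : p.1 < q.1) : q.2 < p.2 := by
  rcases lt_trichotomy q.2 p.2 with h | h | h
  · exact h
  · have := hinj hq hp h
    subst this
    omega
  · have := chainRank_lt_of_mem_below (mem_below.2 ⟨hp, h1, h⟩)
    omega

def maxRank (A : Finset (ℕ × ℕ)) : ℕ := A.sup (chainRank A)

lemma chainRank_le_maxRank (hp : p ∈ A) : chainRank A p ≤ maxRank A :=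
  Finset.le_sup hp

lemma exists_chainRank_eq {s : ℕ} (hs : 1 ≤ s) (hsA : s ≤ maxRank A) :
    ∃ q ∈ A, chainRank A q = s := by
  have hne : A.Nonempty := by
    by_contra h
    rw [Finset.not_nonempty_iff_eq_empty] at h
    simp [maxRank, h] at hsA
    omega
  obtain ⟨p, hp, hmax⟩ := Finset.exists_mem_eq_sup _ hne (chainRank A)
  rcases (show s = chainRank A p ∨ s < chainRank A p by rw [← hmax]; exact hsA.eq_or_lt) with
    rfl | hlt
  · exact ⟨p, hp, rfl⟩
  · obtain ⟨q, hq, hqs⟩ := exists_mem_below_chainRank_eq hs hlt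
    exact ⟨q, (mem_below.1 hq).1, hqs⟩

lemma maxRank_image_swap (A : Finset (ℕ × ℕ)) : maxRank (A.image Prod.swap) = maxRank A := by
  rw [maxRank, maxRank, Finset.sup_image]
  exact Finset.sup_congr rfl fun p _ => chainRank_image_swap A p

end ChainRank

noncomputable section Classes

variable {A : Finset (ℕ × ℕ)} {p q : ℕ × ℕ} {t : ℕ}

def rankClass (A : Finset (ℕ × ℕ)) (t : ℕ) : Finset (ℕ × ℕ) :=
  A.filter fun q => chainRank A q = t

lemma mem_rankClass : q ∈ rankClass A t ↔ q ∈ A ∧ chainRank A q = t :=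
  Finset.mem_filter

def classMinFst (A : Finset (ℕ × ℕ)) (t : ℕ) : ℕ :=
  sInf (Prod.fst '' (rankClass A t : Set (ℕ × ℕ)))

def classMinSnd (A : Finset (ℕ × ℕ)) (t : ℕ) : ℕ :=
  sInf (Prod.snd '' (rankClass A t : Set (ℕ × ℕ)))

lemma classMinSnd_le (hq : q ∈ rankClass A t) : classMinSnd A t ≤ q.2 :=
  Nat.sInf_le ⟨q, hq, rfl⟩

lemma rankClass_image_swap (A : Finset (ℕ × ℕ)) (t : ℕ) :
    rankClass (A.image Prod.swap) t = (rankClass A t).image Prod.swap := by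
  ext r
  simp only [mem_rankClass, Finset.mem_image]
  constructor
  · rintro ⟨⟨q, hq, rfl⟩, hr⟩
    exact ⟨q, ⟨hq, by rwa [chainRank_image_swap] at hr⟩, rfl⟩
  · rintro ⟨q, ⟨hq, hr⟩, rfl⟩
    exact ⟨⟨q, hq, rfl⟩, by rwa [chainRank_image_swap]⟩

lemma classMinSnd_image_swap (A : Finset (ℕ × ℕ)) (t : ℕ) :
    classMinSnd (A.image Prod.swap) t = classMinFst A t := by
  rw [classMinSnd, classMinFst, rankClass_image_swap, Finset.coe_image, Set.image_image]
  rfl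

def firstRowP (A : Finset (ℕ × ℕ)) : List ℕ :=
  (List.range (maxRank A)).map fun i => classMinSnd A (i + 1)

def firstRowQ (A : Finset (ℕ × ℕ)) : List ℕ :=
  (List.range (maxRank A)).map fun i => classMinFst A (i + 1)

lemma firstRowP_image_swap (A : Finset (ℕ × ℕ)) :
    firstRowP (A.image Prod.swap) = firstRowQ A := by
  simp only [firstRowP, firstRowQ, maxRank_image_swap, classMinSnd_image_swap]

def earlierInClass (A : Finset (ℕ × ℕ)) (p : ℕ × ℕ) : Finset (ℕ × ℕ) :=
  A.filter fun q => chainRank A q = chainRank A p ∧ q.1 < p.1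

lemma mem_earlierInClass :
    q ∈ earlierInClass A p ↔ q ∈ A ∧ chainRank A q = chainRank A p ∧ q.1 < p.1 :=
  Finset.mem_filter

/-- The entry bumped out of the first row when `p` is inserted: `p` bumps the most recent
member of its class, whose second coordinate is the least in that class so far. -/
def bumpEntry (A : Finset (ℕ × ℕ)) (p : ℕ × ℕ) : Option (ℕ × ℕ) :=
  if (earlierInClass A p).Nonempty then
    some (p.1, sInf (Prod.snd '' (earlierInClass A p : Set (ℕ × ℕ))))
  else none

def bump (S : List (ℕ × ℕ)) : List (ℕ × ℕ) := S.filterMap (bumpEntry S.toFinset)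

end Classes

section InsertLast

variable {A : Finset (ℕ × ℕ)} {p q : ℕ × ℕ} {s t : ℕ}

lemma rankClass_insert (hlt : ∀ q ∈ A, q.1 < p.1) (t : ℕ) :
    rankClass (insert p A) t =
      if chainRank (insert p A) p = t then insert p (rankClass A t) else rankClass A t := by
  rw [rankClass, Finset.filter_insert, rankClass,
    Finset.filter_congr fun q hq => by rw [chainRank_insert_of_fst_lt (hlt q hq)]]

lemma classMinFst_insert_of_ne (hlt : ∀ q ∈ A, q.1 < p.1)
    (ht : chainRank (insert p A) p ≠ t) :
    classMinFst (insert p A) t = classMinFst A t := by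
  rw [classMinFst, rankClass_insert hlt, if_neg ht, classMinFst]

lemma classMinSnd_insert_of_ne (hlt : ∀ q ∈ A, q.1 < p.1)
    (ht : chainRank (insert p A) p ≠ t) :
    classMinSnd (insert p A) t = classMinSnd A t := by
  rw [classMinSnd, rankClass_insert hlt, if_neg ht, classMinSnd]

lemma below_insert_self : below (insert p A) p = below A p := by
  rw [below, Finset.filter_insert, if_neg (by omega), below]

lemma chainRank_insert_self_le (hlt : ∀ q ∈ A, q.1 < p.1) :
    chainRank (insert p A) p ≤ maxRank A + 1 := by
  rw [chainRank_eq, below_insert_self, add_comm]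
  refine Nat.add_le_add_right (Finset.sup_le fun q hq => ?_) 1
  have hqA := (mem_below.1 hq).1
  rw [chainRank_insert_of_fst_lt (hlt q hqA)]
  exact chainRank_le_maxRank hqA

lemma chainRank_insert_self_eq_of_lt (hlt : ∀ q ∈ A, q.1 < p.1)
    (hc : maxRank A < chainRank (insert p A) p) : chainRank (insert p A) p = maxRank A + 1 :=
  le_antisymm (chainRank_insert_self_le hlt) hc

lemma maxRank_insert (hlt : ∀ q ∈ A, q.1 < p.1) :
    maxRank (insert p A) = max (chainRank (insert p A) p) (maxRank A) := by
  rw [maxRank, Finset.sup_insert, maxRank]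
  congr 1
  exact Finset.sup_congr rfl fun q hq => chainRank_insert_of_fst_lt (hlt q hq)

lemma classMinSnd_lt_of_lt (hs : 1 ≤ s)
    (hsp : s < chainRank (insert p A) p) : classMinSnd A s < p.2 := by
  obtain ⟨q, hq, hqs⟩ := exists_mem_below_chainRank_eq hs hsp
  rw [below_insert_self, mem_below] at hq
  rw [chainRank_insert_of_fst_lt hq.2.1] at hqs
  exact (classMinSnd_le (mem_rankClass.2 ⟨hq.1, hqs⟩)).trans_lt hq.2.2

lemma snd_lt_of_mem_rankClass (hlt : ∀ q ∈ A, q.1 < p.1)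
    (hinj : Set.InjOn Prod.snd ((insert p A : Finset (ℕ × ℕ)) : Set (ℕ × ℕ)))
    (hq : q ∈ rankClass A (chainRank (insert p A) p)) : p.2 < q.2 := by
  obtain ⟨hqA, hqt⟩ := mem_rankClass.1 hq
  have hq1 := hlt q hqA
  refine snd_lt_of_chainRank_eq hinj (Finset.mem_insert_of_mem hqA) (Finset.mem_insert_self p A)
    ?_ hq1
  rw [chainRank_insert_of_fst_lt hq1, hqt]

lemma classMinSnd_insert_self (hlt : ∀ q ∈ A, q.1 < p.1)
    (hinj : Set.InjOn Prod.snd ((insert p A : Finset (ℕ × ℕ)) : Set (ℕ × ℕ))) :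
    classMinSnd (insert p A) (chainRank (insert p A) p) = p.2 := by
  refine le_antisymm (classMinSnd_le (mem_rankClass.2 ⟨Finset.mem_insert_self p A, rfl⟩)) ?_
  refine le_csInf ⟨p.2, p, mem_rankClass.2 ⟨Finset.mem_insert_self p A, rfl⟩, rfl⟩ ?_
  rintro _ ⟨q, hq, rfl⟩
  rw [Finset.mem_coe, rankClass_insert hlt, if_pos rfl, Finset.mem_insert] at hq
  rcases hq with rfl | hq
  · exact le_rfl
  · exact (snd_lt_of_mem_rankClass hlt hinj hq).le

lemma classMinFst_insert_self (hlt : ∀ q ∈ A, q.1 < p.1)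
    (hne : (rankClass A (chainRank (insert p A) p)).Nonempty) :
    classMinFst (insert p A) (chainRank (insert p A) p) =
      classMinFst A (chainRank (insert p A) p) := by
  rw [classMinFst, rankClass_insert hlt, if_pos rfl, Finset.coe_insert, Set.image_insert_eq,
    csInf_insert (OrderBot.bddBelow _) ((Finset.coe_nonempty.2 hne).image _), classMinFst,
    min_eq_right]
  obtain ⟨q, hq⟩ := hne
  exact (Nat.sInf_le (Set.mem_image_of_mem _ hq)).trans (hlt q (mem_rankClass.1 hq).1).le

lemma classMinFst_insert_self_of_eq_empty (hlt : ∀ q ∈ A, q.1 < p.1)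
    (he : rankClass A (chainRank (insert p A) p) = ∅) :
    classMinFst (insert p A) (chainRank (insert p A) p) = p.1 := by
  rw [classMinFst, rankClass_insert hlt, if_pos rfl, he]
  simp

lemma earlierInClass_insert_of_mem (hlt : ∀ q ∈ A, q.1 < p.1) (hq : q ∈ A) :
    earlierInClass (insert p A) q = earlierInClass A q := by
  rw [earlierInClass, Finset.filter_insert, if_neg (fun h => by have := hlt q hq; omega),
    earlierInClass]
  refine Finset.filter_congr fun r hr => ?_
  rw [chainRank_insert_of_fst_lt (hlt r hr), chainRank_insert_of_fst_lt (hlt q hq)]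

lemma earlierInClass_insert_self (hlt : ∀ q ∈ A, q.1 < p.1) :
    earlierInClass (insert p A) p = rankClass A (chainRank (insert p A) p) := by
  rw [earlierInClass, Finset.filter_insert, if_neg (by omega), rankClass]
  refine Finset.filter_congr fun r hr => ?_
  simp [chainRank_insert_of_fst_lt (hlt r hr), hlt r hr]

lemma bumpEntry_insert_of_mem (hlt : ∀ q ∈ A, q.1 < p.1) (hq : q ∈ A) :
    bumpEntry (insert p A) q = bumpEntry A q := by
  rw [bumpEntry, bumpEntry, earlierInClass_insert_of_mem hlt hq]

lemma bumpEntry_insert_self (hlt : ∀ q ∈ A, q.1 < p.1) :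
    bumpEntry (insert p A) p =
      if (rankClass A (chainRank (insert p A) p)).Nonempty then
        some (p.1, classMinSnd A (chainRank (insert p A) p))
      else none := by
  rw [bumpEntry, earlierInClass_insert_self hlt, classMinSnd]

end InsertLast

section FirstRow

variable {A : Finset (ℕ × ℕ)} {p : ℕ × ℕ}

@[simp]
lemma length_firstRowP : (firstRowP A).length = maxRank A := by simp [firstRowP]

@[simp]
lemma getElem_firstRowP {i : ℕ} (hi : i < (firstRowP A).length) :
    (firstRowP A)[i] = classMinSnd A (i + 1) := by simp [firstRowP]

lemma rowInsert_firstRowP_of_le (hlt : ∀ q ∈ A, q.1 < p.1)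
    (hinj : Set.InjOn Prod.snd ((insert p A : Finset (ℕ × ℕ)) : Set (ℕ × ℕ)))
    (hc : chainRank (insert p A) p ≤ maxRank A) :
    rowInsert (firstRowP A) p.2 =
      (firstRowP (insert p A), some (classMinSnd A (chainRank (insert p A) p))) := by
  set c := chainRank (insert p A) p
  have hc1 : 1 ≤ c := one_le_chainRank
  obtain ⟨q, hqA, hqc⟩ := exists_chainRank_eq hc1 hc
  have hq : q ∈ rankClass A c := mem_rankClass.2 ⟨hqA, hqc⟩
  have hpc : p.2 < classMinSnd A c := by
    obtain ⟨r, hr, hr2⟩ := Nat.sInf_mem (Set.Nonempty.image Prod.snd ⟨q, hq⟩)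
    rw [classMinSnd, ← hr2]
    exact snd_lt_of_mem_rankClass hlt hinj hr
  rw [rowInsert_eq_set (k := c - 1) (by simp; omega)
    (fun i hi => by simpa using classMinSnd_lt_of_lt (by omega) (by omega))
    (by simpa [Nat.sub_add_cancel hc1] using hpc.le)]
  simp only [getElem_firstRowP, Nat.sub_add_cancel hc1, Prod.mk.injEq, and_true]
  have hmax : maxRank (insert p A) = maxRank A := by rw [maxRank_insert hlt]; omega
  refine List.ext_getElem (by simp [hmax]) fun i _ _ => ?_
  rw [List.getElem_set, getElem_firstRowP, getElem_firstRowP]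
  split_ifs with hi
  · rw [← hi, Nat.sub_add_cancel hc1, classMinSnd_insert_self hlt hinj]
  · rw [classMinSnd_insert_of_ne hlt (by omega)]

lemma firstRowQ_insert_of_le (hlt : ∀ q ∈ A, q.1 < p.1)
    (hc : chainRank (insert p A) p ≤ maxRank A) :
    firstRowQ (insert p A) = firstRowQ A := by
  have hmax : maxRank (insert p A) = maxRank A := by rw [maxRank_insert hlt]; omega
  rw [firstRowQ, firstRowQ, hmax]
  refine List.map_congr_left fun i hi => ?_
  by_cases hi : chainRank (insert p A) p = i + 1
  · obtain ⟨q, hqA, hqc⟩ := exists_chainRank_eq (s := i + 1) (by omega) (hi ▸ hc)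
    rw [hi.symm, classMinFst_insert_self hlt ⟨q, mem_rankClass.2 ⟨hqA, hqc.trans hi.symm⟩⟩]
  · exact classMinFst_insert_of_ne hlt hi

lemma rankClass_eq_empty_of_lt (h : maxRank A < t) : rankClass A t = ∅ :=
  Finset.filter_false_of_mem fun q hq hqt => by
    have := chainRank_le_maxRank hq
    omega

lemma firstRowP_insert_of_lt (hlt : ∀ q ∈ A, q.1 < p.1)
    (hinj : Set.InjOn Prod.snd ((insert p A : Finset (ℕ × ℕ)) : Set (ℕ × ℕ)))
    (hc : maxRank A < chainRank (insert p A) p) :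
    firstRowP (insert p A) = firstRowP A ++ [p.2] := by
  have hc' := chainRank_insert_self_eq_of_lt hlt hc
  have hmax : maxRank (insert p A) = maxRank A + 1 := by rw [maxRank_insert hlt]; omega
  rw [firstRowP, firstRowP, hmax, List.range_succ, List.map_append, List.map_singleton,
    ← hc', classMinSnd_insert_self hlt hinj]
  congr 1
  exact List.map_congr_left fun i hi => classMinSnd_insert_of_ne hlt
    (by simp at hi; omega)

lemma firstRowQ_insert_of_lt (hlt : ∀ q ∈ A, q.1 < p.1)
    (hc : maxRank A < chainRank (insert p A) p) :
    firstRowQ (insert p A) = firstRowQ A ++ [p.1] := by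
  have hc' := chainRank_insert_self_eq_of_lt hlt hc
  have hmax : maxRank (insert p A) = maxRank A + 1 := by rw [maxRank_insert hlt]; omega
  rw [firstRowQ, firstRowQ, hmax, List.range_succ, List.map_append, List.map_singleton,
    ← hc', classMinFst_insert_self_of_eq_empty hlt (rankClass_eq_empty_of_lt hc)]
  congr 1
  exact List.map_congr_left fun i hi => classMinFst_insert_of_ne hlt
    (by simp at hi; omega)

lemma lt_of_mem_firstRowP (hc : maxRank A < chainRank (insert p A) p) :
    ∀ a ∈ firstRowP A, a < p.2 := by
  intro a ha
  obtain ⟨i, hi, rfl⟩ := List.mem_map.1 ha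
  exact classMinSnd_lt_of_lt (by omega) (by simp at hi; omega)

end FirstRow

/-- Insertion into the first row only; the bumped values, paired with the times at which they
were bumped, are collected into the array that is fed to the lower rows. -/
def rowStep (s : List ℕ × List ℕ × List (ℕ × ℕ)) (p : ℕ × ℕ) :
    List ℕ × List ℕ × List (ℕ × ℕ) :=
  match rowInsert s.1 p.2 with
  | (r, none) => (r, s.2.1 ++ [p.1], s.2.2)
  | (r, some y) => (r, s.2.1, s.2.2 ++ [(p.1, y)])

def rowPass (S : List (ℕ × ℕ)) : List ℕ × List ℕ × List (ℕ × ℕ) :=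
  S.foldl rowStep ([], [], [])

lemma rowStep_firstRows {A : Finset (ℕ × ℕ)} {p : ℕ × ℕ} (hlt : ∀ q ∈ A, q.1 < p.1)
    (hinj : Set.InjOn Prod.snd ((insert p A : Finset (ℕ × ℕ)) : Set (ℕ × ℕ)))
    (L : List (ℕ × ℕ)) :
    rowStep (firstRowP A, firstRowQ A, L) p =
      (firstRowP (insert p A), firstRowQ (insert p A), L ++ (bumpEntry (insert p A) p).toList) := by
  rw [bumpEntry_insert_self hlt]
  by_cases hc : chainRank (insert p A) p ≤ maxRank A
  · obtain ⟨q, hqA, hqc⟩ := exists_chainRank_eq one_le_chainRank hc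
    rw [rowStep, rowInsert_firstRowP_of_le hlt hinj hc, firstRowQ_insert_of_le hlt hc,
      if_pos ⟨q, mem_rankClass.2 ⟨hqA, hqc⟩⟩]
    rfl
  · rw [not_le] at hc
    rw [rowStep, rowInsert_of_forall_lt (lt_of_mem_firstRowP hc),
      firstRowP_insert_of_lt hlt hinj hc, firstRowQ_insert_of_lt hlt hc,
      if_neg (by rw [rankClass_eq_empty_of_lt hc]; simp)]
    simp

lemma List.toFinset_append_singleton {α : Type*} [DecidableEq α] (l : List α) (a : α) :
    (l ++ [a]).toFinset = insert a l.toFinset := by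
  ext
  simp

lemma bump_append {S : List (ℕ × ℕ)} {p : ℕ × ℕ} (hlt : ∀ q ∈ S, q.1 < p.1) :
    bump (S ++ [p]) = bump S ++ (bumpEntry (insert p S.toFinset) p).toList := by
  have hlt' : ∀ q ∈ S.toFinset, q.1 < p.1 := fun q hq => hlt q (List.mem_toFinset.1 hq)
  rw [bump, bump, List.toFinset_append_singleton, List.filterMap_append,
    List.filterMap_congr fun q hq => bumpEntry_insert_of_mem hlt' (List.mem_toFinset.2 hq)]
  cases h : bumpEntry (insert p S.toFinset) p <;> simp [h]

theorem rowPass_eq {S : List (ℕ × ℕ)} (hS : S.Pairwise (·.1 < ·.1))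
    (hinj : Set.InjOn Prod.snd (S.toFinset : Set (ℕ × ℕ))) :
    rowPass S = (firstRowP S.toFinset, firstRowQ S.toFinset, bump S) := by
  induction S using List.reverseRecOn with
  | nil => rfl
  | append_singleton S p ih =>
    have hlt : ∀ q ∈ S, q.1 < p.1 := fun q hq =>
      (List.pairwise_append.1 hS).2.2 q hq p (List.mem_singleton_self p)
    rw [List.toFinset_append_singleton] at hinj ⊢
    rw [rowPass, List.foldl_append, ← rowPass, ih (List.pairwise_append.1 hS).1
      (hinj.mono (by simp)), List.foldl_cons, List.foldl_nil,
      rowStep_firstRows (fun q hq => hlt q (List.mem_toFinset.1 hq)) hinj, bump_append hlt]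

theorem rsk_eq_cons_rowPass {S : List (ℕ × ℕ)} (hS : S ≠ []) :
    rsk S = ((rowPass S).1 :: (rsk (rowPass S).2.2).1,
      (rowPass S).2.1 :: (rsk (rowPass S).2.2).2) := by
  induction S using List.reverseRecOn with
  | nil => exact absurd rfl hS
  | append_singleton S p ih =>
    rcases eq_or_ne S [] with rfl | hS'
    · rfl
    have hpass : rowPass (S ++ [p]) = rowStep (rowPass S) p := by
      rw [rowPass, List.foldl_append]
      rfl
    rw [rsk_append, hpass, ih hS', rowStep]
    rcases h : rowInsert (rowPass S).1 p.2 with ⟨r, _ | y⟩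
    · exact RSKstep_cons_of_rowInsert_eq_none h
    · rw [RSKstep_cons_of_rowInsert_eq_some h, rsk_append]

section Symmetry

variable {A : Finset (ℕ × ℕ)} {p q p₁ p₂ x : ℕ × ℕ}

lemma injOn_fst_image_swap :
    Set.InjOn Prod.fst (A.image Prod.swap : Set (ℕ × ℕ)) ↔
      Set.InjOn Prod.snd (A : Set (ℕ × ℕ)) := by
  rw [Finset.coe_image, ← Prod.swap_injective.injOn.comp_iff]
  rfl

lemma injOn_fst_of_pairwise {S : List (ℕ × ℕ)} (hS : S.Pairwise (·.1 < ·.1)) :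
    Set.InjOn Prod.fst (S.toFinset : Set (ℕ × ℕ)) := by
  intro p hp q hq
  exact List.inj_on_of_nodup_map (List.pairwise_map.2 hS).nodup
    (List.mem_toFinset.1 hp) (List.mem_toFinset.1 hq)

lemma fst_lt_iff_snd_lt_of_chainRank_eq (hfst : Set.InjOn Prod.fst (A : Set (ℕ × ℕ)))
    (hsnd : Set.InjOn Prod.snd (A : Set (ℕ × ℕ))) (hp : p ∈ A) (hq : q ∈ A)
    (h : chainRank A p = chainRank A q) : p.1 < q.1 ↔ q.2 < p.2 := by
  refine ⟨snd_lt_of_chainRank_eq hsnd hp hq h, fun h2 => ?_⟩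
  rcases lt_trichotomy p.1 q.1 with h1 | h1 | h1
  · exact h1
  · obtain rfl := hfst hp hq h1
    omega
  · have := snd_lt_of_chainRank_eq hsnd hq hp h.symm h1
    omega

def IsClassPred (A : Finset (ℕ × ℕ)) (p₁ p₂ : ℕ × ℕ) : Prop :=
  p₁ ∈ A ∧ p₂ ∈ A ∧ chainRank A p₁ = chainRank A p₂ ∧ p₁.1 < p₂.1 ∧
    ∀ r ∈ A, chainRank A r = chainRank A p₁ → p₁.1 < r.1 → p₂.1 ≤ r.1

lemma IsClassPred.image_swap (hfst : Set.InjOn Prod.fst (A : Set (ℕ × ℕ)))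
    (hsnd : Set.InjOn Prod.snd (A : Set (ℕ × ℕ))) (h : IsClassPred A p₁ p₂) :
    IsClassPred (A.image Prod.swap) p₂.swap p₁.swap := by
  obtain ⟨hp₁, hp₂, hrank, hlt, hnext⟩ := h
  have hiff {p q} := @fst_lt_iff_snd_lt_of_chainRank_eq A p q hfst hsnd
  refine ⟨Finset.mem_image_of_mem _ hp₂, Finset.mem_image_of_mem _ hp₁, ?_,
    (hiff hp₁ hp₂ hrank).1 hlt, ?_⟩
  · rw [chainRank_image_swap, chainRank_image_swap, hrank]
  · simp only [Finset.mem_image, forall_exists_index, and_imp]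
    rintro _ r hr rfl hr_rank hr_lt
    rw [chainRank_image_swap, chainRank_image_swap] at hr_rank
    have hr₂ : r.1 < p₂.1 := (hiff hr hp₂ hr_rank).2 hr_lt
    by_contra! hr₁
    exact absurd (hnext r hr (hr_rank.trans hrank.symm) ((hiff hp₁ hr
      (hrank.trans hr_rank.symm)).2 hr₁)) (not_le.2 hr₂)

lemma bumpEntry_eq_some_iff (hfst : Set.InjOn Prod.fst (A : Set (ℕ × ℕ)))
    (hsnd : Set.InjOn Prod.snd (A : Set (ℕ × ℕ))) (hp₂ : p₂ ∈ A) :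
    bumpEntry A p₂ = some x ↔ ∃ p₁, IsClassPred A p₁ p₂ ∧ x = (p₂.1, p₁.2) := by
  have hiff {p q} := @fst_lt_iff_snd_lt_of_chainRank_eq A p q hfst hsnd
  rw [bumpEntry]
  constructor
  · intro h
    split_ifs at h with hne
    obtain ⟨p₁, hp₁, hmin⟩ :=
      Nat.sInf_mem (Set.Nonempty.image Prod.snd (Finset.coe_nonempty.2 hne))
    obtain ⟨hp₁A, hrank, hlt⟩ := mem_earlierInClass.1 hp₁
    refine ⟨p₁, ⟨hp₁A, hp₂, hrank, hlt, fun r hr hr_rank hr_lt => ?_⟩, ?_⟩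
    · by_contra! hr₂
      have hmem : r ∈ earlierInClass A p₂ :=
        mem_earlierInClass.2 ⟨hr, hr_rank.trans hrank, hr₂⟩
      have hle := Nat.sInf_le (Set.mem_image_of_mem Prod.snd (Finset.mem_coe.2 hmem))
      have := (hiff hp₁A hr (hrank.trans (hr_rank.trans hrank).symm)).1 hr_lt
      omega
    · rw [← Option.some_inj, ← h, hmin]
  · rintro ⟨p₁, ⟨hp₁, -, hrank, hlt, hnext⟩, rfl⟩
    have hp₁E : p₁ ∈ earlierInClass A p₂ := mem_earlierInClass.2 ⟨hp₁, hrank, hlt⟩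
    rw [if_pos ⟨p₁, hp₁E⟩, Option.some_inj, Prod.mk.injEq]
    refine ⟨rfl, le_antisymm (Nat.sInf_le (Set.mem_image_of_mem _ hp₁E)) ?_⟩
    refine le_csInf ⟨p₁.2, p₁, hp₁E, rfl⟩ ?_
    rintro _ ⟨r, hr, rfl⟩
    obtain ⟨hrA, hr_rank, hr_lt⟩ := mem_earlierInClass.1 hr
    have hrank' : chainRank A p₁ = chainRank A r := hrank.trans hr_rank.symm
    by_contra! hr₂
    exact absurd (hnext r hrA hrank'.symm ((hiff hp₁ hrA hrank').2 hr₂)) (not_le.2 hr_lt)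

end Symmetry

section Bump

variable {S S' : List (ℕ × ℕ)}

lemma mem_bump_iff (hfst : Set.InjOn Prod.fst (S.toFinset : Set (ℕ × ℕ)))
    (hsnd : Set.InjOn Prod.snd (S.toFinset : Set (ℕ × ℕ))) {x : ℕ × ℕ} :
    x ∈ bump S ↔ ∃ p₁ p₂, IsClassPred S.toFinset p₁ p₂ ∧ x = (p₂.1, p₁.2) := by
  rw [bump, List.mem_filterMap]
  constructor
  · rintro ⟨p₂, hp₂, h⟩
    obtain ⟨p₁, hc, rfl⟩ := (bumpEntry_eq_some_iff hfst hsnd (List.mem_toFinset.2 hp₂)).1 h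
    exact ⟨p₁, p₂, hc, rfl⟩
  · rintro ⟨p₁, p₂, hc, rfl⟩
    exact ⟨p₂, List.mem_toFinset.1 hc.2.1,
      (bumpEntry_eq_some_iff hfst hsnd hc.2.1).2 ⟨p₁, hc, rfl⟩⟩

lemma toFinset_bump_of_image_swap (hfst : Set.InjOn Prod.fst (S.toFinset : Set (ℕ × ℕ)))
    (hsnd : Set.InjOn Prod.snd (S.toFinset : Set (ℕ × ℕ)))
    (h : S'.toFinset = S.toFinset.image Prod.swap) :
    (bump S').toFinset = (bump S).toFinset.image Prod.swap := by
  have h' : S.toFinset = S'.toFinset.image Prod.swap := by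
    rw [h, Finset.image_image, Prod.swap_swap_eq, Finset.image_id]
  have hfst' : Set.InjOn Prod.fst (S'.toFinset : Set (ℕ × ℕ)) := by
    rwa [h, injOn_fst_image_swap]
  have hsnd' : Set.InjOn Prod.snd (S'.toFinset : Set (ℕ × ℕ)) := by
    rwa [← injOn_fst_image_swap, ← h']
  ext x
  simp only [List.mem_toFinset, Finset.mem_image, mem_bump_iff hfst' hsnd',
    mem_bump_iff hfst hsnd]
  constructor
  · rintro ⟨p₁, p₂, hc, rfl⟩
    exact ⟨_, ⟨_, _, h' ▸ hc.image_swap hfst' hsnd', rfl⟩, rfl⟩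
  · rintro ⟨_, ⟨p₁, p₂, hc, rfl⟩, rfl⟩
    exact ⟨_, _, h ▸ hc.image_swap hfst hsnd, rfl⟩

lemma pairwise_bump (hS : S.Pairwise (·.1 < ·.1)) : (bump S).Pairwise (·.1 < ·.1) := by
  have hfst : ∀ {p x}, bumpEntry S.toFinset p = some x → x.1 = p.1 := by
    intro p x h
    rw [bumpEntry] at h
    split_ifs at h
    cases h
    rfl
  rw [bump, List.pairwise_filterMap]
  exact hS.imp fun hab x hx y hy => by rw [hfst hx, hfst hy]; exact hab

lemma length_bump_lt (hS : S.Pairwise (·.1 < ·.1)) (hne : S ≠ []) :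
    (bump S).length < S.length := by
  obtain ⟨q, T, rfl⟩ := List.exists_cons_of_ne_nil hne
  have hq : bumpEntry (q :: T).toFinset q = none := by
    refine if_neg fun ⟨r, hr⟩ => ?_
    obtain ⟨hrS, -, hr_lt⟩ := mem_earlierInClass.1 hr
    rcases List.mem_cons.1 (List.mem_toFinset.1 hrS) with rfl | hrT
    · omega
    · have := List.rel_of_pairwise_cons hS hrT
      omega
  rw [bump, List.filterMap_cons, hq, List.length_cons]
  exact Nat.lt_succ_of_le (List.length_filterMap_le _ _)

end Bump

theorem rsk_snd_eq_rsk_fst_of_toFinset_eq_image_swap {S S' : List (ℕ × ℕ)}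
    (hS : S.Pairwise (·.1 < ·.1)) (hS' : S'.Pairwise (·.1 < ·.1))
    (h : S'.toFinset = S.toFinset.image Prod.swap) : (rsk S).2 = (rsk S').1 := by
  induction hn : S.length using Nat.strong_induction_on generalizing S S' with
  | _ n ih =>
    rcases eq_or_ne S [] with rfl | hne
    · rw [List.toFinset_nil, Finset.image_empty, List.toFinset_eq_empty_iff] at h
      rw [h]
      rfl
    have hne' : S' ≠ [] := by
      rintro rfl
      rw [List.toFinset_nil, eq_comm, Finset.image_eq_empty, List.toFinset_eq_empty_iff] at h
      exact hne h
    have hfst := injOn_fst_of_pairwise hS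
    have hsnd : Set.InjOn Prod.snd (S.toFinset : Set (ℕ × ℕ)) := by
      rw [← injOn_fst_image_swap, ← h]
      exact injOn_fst_of_pairwise hS'
    have hsnd' : Set.InjOn Prod.snd (S'.toFinset : Set (ℕ × ℕ)) := by
      rw [← injOn_fst_image_swap, h, Finset.image_image, Prod.swap_swap_eq, Finset.image_id]
      exact hfst
    rw [rsk_eq_cons_rowPass hne, rsk_eq_cons_rowPass hne', rowPass_eq hS hsnd,
      rowPass_eq hS' hsnd', h, firstRowP_image_swap,
      ih _ (hn ▸ length_bump_lt hS hne) (pairwise_bump hS) (pairwise_bump hS')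
        (toFinset_bump_of_image_swap hfst hsnd h) rfl]

/-- `Q(w) = P(w⁻¹)` and consequently `P(w) = Q(w⁻¹)`. -/
theorem Qtab_eq_Ptab_inv (n : ℕ) (w : Equiv.Perm (Fin n)) :
    Qtab w = Ptab w⁻¹ ∧ Ptab w = Qtab w⁻¹ := by
  have key (u : Equiv.Perm (Fin n)) : Qtab u = Ptab u⁻¹ := by
    rw [Qtab_eq_rsk, Ptab_eq_rsk]
    exact rsk_snd_eq_rsk_fst_of_toFinset_eq_image_swap (pairwise_fst_lt_permArray u)
      (pairwise_fst_lt_permArray u⁻¹) (toFinset_permArray_inv u)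
  exact ⟨key w, by simpa using (key w⁻¹).symm⟩
end

section
/- Restriction property of RSK recording tableaux: let w ∈ S_n and 1 ≤ m ≤ n. Write w = d·z where z ∈ S_m (the subgroup fixing m+1,…,n) and d is the minimal length left coset representative of w in wS_m. Then the recording tableau Q(z) (computed in S_m) equals the subtableau of Q(w) obtained by removing the boxes containing m+1, m+2, …, n. -/
/-!
Minimality of `d` in its coset `d S_m` forces `d` to be increasing on `1, …, m`: a descent
`d (i+1) < d i` there would be removed by the adjacent transposition `(i i+1) ∈ S_m`,
shortening `d`. Hence the first `m` letters of the word of `w = d z` are those of `z` relabelled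
by an increasing map. Schensted insertion only compares letters, so the first `m` steps of RSK
for `w` record the same tableau as RSK for `z`; the later steps only add entries larger than `m`
to `Q`, and the restriction discards them.
-/

def RSKsteps (pq : List (List ℕ) × List (List ℕ)) (l : List (ℕ × ℕ)) :
    List (List ℕ) × List (List ℕ) :=
  l.foldl (fun pq p => RSKstep pq p.1 (p.2 + 1)) pq

theorem RSKfold_eq_RSKsteps (xs : List ℕ) :
    RSKfold xs = RSKsteps ([], []) (xs.zip (List.range xs.length)) := rfl

section Relabel

variable {g : ℕ → ℕ} {s : Set ℕ}

theorem mem_of_rowInsert_snd_eq_some :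
    ∀ {r : List ℕ} {x y : ℕ}, (rowInsert r x).2 = some y → y ∈ r
  | [], _, _, h => by simp [rowInsert] at h
  | a :: as, x, y, h => by
    by_cases hax : a < x
    · simp only [rowInsert, if_pos hax] at h
      exact List.mem_cons_of_mem _ (mem_of_rowInsert_snd_eq_some h)
    · simp_all [rowInsert]

theorem mem_or_eq_of_mem_rowInsert_fst :
    ∀ {r : List ℕ} {x e : ℕ}, e ∈ (rowInsert r x).1 → e ∈ r ∨ e = x
  | [], _, _, h => by simpa [rowInsert] using h
  | a :: as, x, e, h => by
    by_cases hax : a < x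
    · simp only [rowInsert, if_pos hax, List.mem_cons] at h
      rcases h with rfl | h
      · simp
      · rcases mem_or_eq_of_mem_rowInsert_fst h with h | h <;> simp [h]
    · simp only [rowInsert, if_neg hax, List.mem_cons] at h
      rcases h with h | h <;> simp [h]

theorem mem_or_eq_of_mem_insertTab :
    ∀ {t : List (List ℕ)} {x e : ℕ}, e ∈ (insertTab t x).flatten → e ∈ t.flatten ∨ e = x
  | [], _, _, h => by simpa [insertTab] using h
  | r :: rest, x, e, h => by
    rcases hr : rowInsert r x with ⟨r', _ | y⟩
    all_goals
      have hrow : e ∈ r' → e ∈ r ∨ e = x := fun h' =>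
        mem_or_eq_of_mem_rowInsert_fst (by rw [hr]; exact h')
      simp only [insertTab, hr, List.flatten_cons, List.mem_append] at h ⊢
    · tauto
    · have hy : y ∈ r := mem_of_rowInsert_snd_eq_some (by rw [hr])
      rcases h with h | h
      · tauto
      · rcases mem_or_eq_of_mem_insertTab h with h | rfl <;> tauto

theorem rowInsert_map (hg : StrictMonoOn g s) :
    ∀ {r : List ℕ} {x : ℕ}, (∀ e ∈ r, e ∈ s) → x ∈ s →
      rowInsert (r.map g) (g x) = ((rowInsert r x).1.map g, (rowInsert r x).2.map g)
  | [], _, _, _ => by simp [rowInsert]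
  | a :: as, x, hr, hx => by
    have ha : a ∈ s := hr a List.mem_cons_self
    by_cases hax : a < x
    · have ih := rowInsert_map hg (fun e he => hr e (List.mem_cons_of_mem _ he)) hx
      simp only [List.map_cons, rowInsert, if_pos hax, if_pos (hg ha hx hax), ih]
    · simp [rowInsert, if_neg hax, (hg.lt_iff_lt ha hx).not.mpr hax]

theorem insertTab_map (hg : StrictMonoOn g s) :
    ∀ {t : List (List ℕ)} {x : ℕ}, (∀ e ∈ t.flatten, e ∈ s) → x ∈ s →
      insertTab (t.map (List.map g)) (g x) = (insertTab t x).map (List.map g)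
  | [], _, _, _ => by simp [insertTab]
  | r :: rest, x, ht, hx => by
    have hr : ∀ e ∈ r, e ∈ s := fun e he => ht e (by simp [he])
    have hrest : ∀ e ∈ rest.flatten, e ∈ s := fun e he => ht e (by simp [he])
    have hrow := rowInsert_map hg hr hx
    rcases h : rowInsert r x with ⟨r', _ | y⟩
    · simp only [insertTab, List.map_cons, hrow, h, Option.map_none]
    · have hy : y ∈ s := hr y (mem_of_rowInsert_snd_eq_some (by rw [h]))
      simp only [insertTab, List.map_cons, hrow, h, Option.map_some,
        insertTab_map hg hrest hy]

theorem shape_map_map (t : List (List ℕ)) : shape (t.map (List.map g)) = shape t := by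
  simp [shape, Function.comp_def]

theorem RSKsteps_map (hg : StrictMonoOn g s) :
    ∀ {l : List (ℕ × ℕ)} {t q : List (List ℕ)}, (∀ e ∈ t.flatten, e ∈ s) → (∀ p ∈ l, p.1 ∈ s) →
      RSKsteps (t.map (List.map g), q) (l.map (Prod.map g id)) =
        ((RSKsteps (t, q) l).1.map (List.map g), (RSKsteps (t, q) l).2)
  | [], _, _, _, _ => rfl
  | p :: l, t, q, ht, hl => by
    have hp : p.1 ∈ s := hl p List.mem_cons_self
    have hstep : RSKstep (t.map (List.map g), q) (g p.1) (p.2 + 1) =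
        ((insertTab t p.1).map (List.map g), (RSKstep (t, q) p.1 (p.2 + 1)).2) := by
      simp only [RSKstep, insertTab_map hg ht hp, shape_map_map]
    have ht' : ∀ e ∈ (insertTab t p.1).flatten, e ∈ s := fun e he =>
      (mem_or_eq_of_mem_insertTab he).elim (ht e) (· ▸ hp)
    exact (congrArg (RSKsteps · _) hstep).trans
      (RSKsteps_map hg ht' fun p' hp' => hl p' (List.mem_cons_of_mem _ hp'))

theorem RSKfold_map_snd (hg : StrictMonoOn g s) {xs : List ℕ} (hxs : ∀ x ∈ xs, x ∈ s) :
    (RSKfold (xs.map g)).2 = (RSKfold xs).2 := by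
  rw [RSKfold_eq_RSKsteps, RSKfold_eq_RSKsteps, List.length_map, List.zip_map_left]
  have h := RSKsteps_map (l := xs.zip (List.range xs.length)) (t := []) (q := []) hg (by simp)
    fun p hp => hxs p.1 (List.of_mem_zip hp).1
  simpa using congrArg Prod.snd h

end Relabel

theorem restrictTab_cons (r : List ℕ) (t : List (List ℕ)) (m : ℕ) :
    restrictTab (r :: t) m =
      if r.filter (· ≤ m) = [] then restrictTab t m
      else r.filter (· ≤ m) :: restrictTab t m := by
  by_cases h : r.filter (· ≤ m) = [] <;> simp [restrictTab, h]

theorem restrictTab_eq_self {m : ℕ} :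
    ∀ {q : List (List ℕ)}, (∀ r ∈ q, r ≠ []) → (∀ e ∈ q.flatten, e ≤ m) → restrictTab q m = q
  | [], _, _ => rfl
  | r :: t, h₁, h₂ => by
    have hr : r.filter (· ≤ m) = r :=
      List.filter_eq_self.2 fun e he => by simp [h₂ e (by simp [he])]
    rw [restrictTab_cons, hr, if_neg (h₁ r List.mem_cons_self),
      restrictTab_eq_self (fun s hs => h₁ s (List.mem_cons_of_mem _ hs))
        (fun e he => h₂ e (by simp [he]))]

theorem placeAt_nil (r k : ℕ) : placeAt [] r k = [[k]] := by cases r <;> rfl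

theorem restrictTab_placeAt_of_lt {m k : ℕ} (hk : m < k) :
    ∀ (q : List (List ℕ)) (r : ℕ), restrictTab (placeAt q r k) m = restrictTab q m
  | [], r => by simp [placeAt_nil, restrictTab, hk]
  | row :: qs, 0 => by
    simp [placeAt, restrictTab_cons, not_le.2 hk]
  | row :: qs, r + 1 => by
    simp only [placeAt, restrictTab_cons, restrictTab_placeAt_of_lt hk qs r]

theorem ne_nil_of_mem_placeAt :
    ∀ {q : List (List ℕ)} {r k : ℕ}, (∀ row ∈ q, row ≠ []) → ∀ row ∈ placeAt q r k, row ≠ []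
  | [], r, k, _ => by simp [placeAt_nil]
  | q :: qs, 0, k, h => by
    simp only [placeAt, List.mem_cons, forall_eq_or_imp]
    exact ⟨by simp, fun row hrow => h row (List.mem_cons_of_mem _ hrow)⟩
  | q :: qs, r + 1, k, h => by
    simp only [placeAt, List.mem_cons, forall_eq_or_imp]
    exact ⟨h q List.mem_cons_self,
      ne_nil_of_mem_placeAt (fun row hrow => h row (List.mem_cons_of_mem _ hrow))⟩

theorem mem_or_eq_of_mem_placeAt :
    ∀ {q : List (List ℕ)} {r k e : ℕ}, e ∈ (placeAt q r k).flatten → e ∈ q.flatten ∨ e = k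
  | [], r, k, e, h => by simpa [placeAt_nil] using h
  | q :: qs, 0, k, e, h => by
    simp only [placeAt, List.flatten_cons, List.mem_append, List.mem_singleton] at h ⊢
    tauto
  | q :: qs, r + 1, k, e, h => by
    simp only [placeAt, List.flatten_cons, List.mem_append] at h ⊢
    have := @mem_or_eq_of_mem_placeAt qs r k e
    tauto

theorem restrictTab_RSKsteps_snd_of_le {m : ℕ} :
    ∀ {l : List (ℕ × ℕ)} (pq : List (List ℕ) × List (List ℕ)), (∀ p ∈ l, m ≤ p.2) →
      restrictTab (RSKsteps pq l).2 m = restrictTab pq.2 m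
  | [], _, _ => rfl
  | p :: l, pq, hl => by
    rw [RSKsteps, List.foldl_cons, ← RSKsteps,
      restrictTab_RSKsteps_snd_of_le _ fun p' hp' => hl p' (List.mem_cons_of_mem _ hp')]
    exact restrictTab_placeAt_of_lt (Nat.lt_succ_of_le (hl p List.mem_cons_self)) _ _

theorem RSKsteps_snd_ne_nil_and_le {m : ℕ} :
    ∀ {l : List (ℕ × ℕ)} {pq : List (List ℕ) × List (List ℕ)}, (∀ p ∈ l, p.2 < m) →
      (∀ r ∈ pq.2, r ≠ []) → (∀ e ∈ pq.2.flatten, e ≤ m) →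
      (∀ r ∈ (RSKsteps pq l).2, r ≠ []) ∧ ∀ e ∈ (RSKsteps pq l).2.flatten, e ≤ m
  | [], _, _, h₁, h₂ => ⟨h₁, h₂⟩
  | p :: l, pq, hl, h₁, h₂ =>
    RSKsteps_snd_ne_nil_and_le (l := l) (pq := RSKstep pq p.1 (p.2 + 1))
      (fun p' hp' => hl p' (List.mem_cons_of_mem _ hp'))
      (ne_nil_of_mem_placeAt h₁)
      fun e he => (mem_or_eq_of_mem_placeAt he).elim (h₂ e)
        fun he => he ▸ hl p List.mem_cons_self

theorem restrictTab_RSKfold_append (xs ys : List ℕ) :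
    restrictTab (RSKfold (xs ++ ys)).2 xs.length = (RSKfold xs).2 := by
  have hsplit : RSKfold (xs ++ ys) =
      RSKsteps (RSKfold xs) (ys.zip ((List.range ys.length).map (xs.length + ·))) := by
    rw [RSKfold_eq_RSKsteps, RSKfold_eq_RSKsteps, List.length_append, List.range_add,
      List.zip_append (by simp), RSKsteps, List.foldl_append]
    rfl
  have hinv := RSKsteps_snd_ne_nil_and_le (m := xs.length)
    (l := xs.zip (List.range xs.length)) (pq := ([], []))
    (fun p hp => List.mem_range.1 (List.of_mem_zip hp).2) (by simp) (by simp)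
  rw [hsplit, restrictTab_RSKsteps_snd_of_le, RSKfold_eq_RSKsteps]
  · exact restrictTab_eq_self hinv.1 hinv.2
  · intro p hp
    obtain ⟨j, -, hj⟩ := List.mem_map.1 (List.of_mem_zip hp).2
    omega

theorem restrictTab_RSKfold_snd {xs : List ℕ} {m : ℕ} (hm : m ≤ xs.length) :
    restrictTab (RSKfold xs).2 m = (RSKfold (xs.take m)).2 := by
  have h := restrictTab_RSKfold_append (xs.take m) (xs.drop m)
  rwa [List.take_append_drop, List.length_take_of_le hm] at h

section MinimalCosetRepresentative

open Equiv

theorem swap_lt_swap_of_covBy {α : Type*} [LinearOrder α] {a b p q : α} (hab : a ⋖ b)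
    (hpq : p < q) (hne : (p, q) ≠ (a, b)) : swap a b p < swap a b q := by
  have hlt := hab.lt
  have hbetween : ∀ c, a < c → c < b → False := fun _ h₁ h₂ => hab.2 h₁ h₂
  rw [swap_apply_def, swap_apply_def]
  split_ifs <;> grind

theorem invCount_mul_swap_lt {n : ℕ} (d : Perm (Fin n)) {a b : Fin n} (hab : a ⋖ b)
    (hdesc : d b < d a) : invCount (d * swap a b) < invCount d := by
  set inv : Perm (Fin n) → Finset (Fin n × Fin n) := fun w =>
    Finset.univ.filter fun p => p.1 < p.2 ∧ w p.2 < w p.1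
  let φ := ((swap a b).prodCongr (swap a b)).toEmbedding
  have hab_mem : (a, b) ∈ inv d := Finset.mem_filter.2 ⟨Finset.mem_univ _, hab.lt, hdesc⟩
  have hsub : (inv (d * swap a b)).map φ ⊆ (inv d).erase (a, b) := by
    intro _ hmem
    obtain ⟨⟨p₁, p₂⟩, hp, rfl⟩ := Finset.mem_map.1 hmem
    obtain ⟨hlt, hinv⟩ := (Finset.mem_filter.1 hp).2
    have hne : (p₁, p₂) ≠ (a, b) := by
      rintro ⟨⟩
      simp only [Perm.mul_apply, swap_apply_left, swap_apply_right] at hinv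
      exact hinv.not_gt hdesc
    have hne' : (swap a b p₁, swap a b p₂) ≠ (a, b) := by
      intro h
      simp only [Prod.mk.injEq, swap_apply_eq_iff, swap_apply_left, swap_apply_right] at h
      exact hlt.not_gt (h.1 ▸ h.2 ▸ hab.lt)
    exact Finset.mem_erase.2 ⟨hne', Finset.mem_filter.2
      ⟨Finset.mem_univ _, swap_lt_swap_of_covBy hab hlt hne, hinv⟩⟩
  calc invCount (d * swap a b) = ((inv (d * swap a b)).map φ).card := (Finset.card_map _).symm
    _ ≤ ((inv d).erase (a, b)).card := Finset.card_le_card hsub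
    _ < invCount d := Finset.card_erase_lt_of_mem hab_mem

theorem strictMonoOn_of_invCount_le_mul_swap {n : ℕ} (d : Perm (Fin n)) {s : Set (Fin n)}
    (hs : s.OrdConnected)
    (hd : ∀ a ∈ s, ∀ b ∈ s, a ⋖ b → invCount d ≤ invCount (d * swap a b)) :
    StrictMonoOn d s :=
  strictMonoOn_of_lt_succ hs fun a ha has hsa => by
    have hcov := Order.covBy_succ_of_not_isMax ha
    refine lt_of_le_of_ne (not_lt.1 fun hlt => ?_) (d.injective.ne hcov.ne)
    exact (hd a has _ hsa hcov).not_gt (invCount_mul_swap_lt d hcov hlt)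

theorem strictMonoOn_val_lt_of_invCount_le_mul {n m : ℕ} {d : Perm (Fin n)}
    (hd : ∀ z : Perm (Fin n), (∀ i : Fin n, m ≤ (i : ℕ) → z i = i) →
      invCount d ≤ invCount (d * z)) :
    StrictMonoOn d {i | (i : ℕ) < m} :=
  strictMonoOn_of_invCount_le_mul_swap d
    ⟨fun _ _ _ hj _ hk => lt_of_le_of_lt (Fin.le_def.1 hk.2) hj⟩
    fun a ha b hb _ => hd _ fun i hi =>
      swap_apply_of_ne_of_ne (by rintro rfl; exact hi.not_gt ha) (by rintro rfl; exact hi.not_gt hb)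

theorem Qtab_eq_RSKfold_take {n m : ℕ} (hmn : m ≤ n) {d z : Perm (Fin n)}
    (hd : StrictMonoOn d {i | (i : ℕ) < m}) {zr : Perm (Fin m)}
    (hzr : ∀ (i : Fin n) (hi : (i : ℕ) < m), (z i : ℕ) = (zr ⟨i, hi⟩ : ℕ)) :
    Qtab zr = (RSKfold ((List.ofFn fun i => ((d * z) i : ℕ) + 1).take m)).2 := by
  set g : ℕ → ℕ := fun t => if h : t - 1 < n then (d ⟨t - 1, h⟩ : ℕ) + 1 else t
  have hg : StrictMonoOn g (Set.Icc 1 m) := fun a ⟨ha₁, ha₂⟩ b ⟨hb₁, hb₂⟩ hab => by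
    have := hd (a := ⟨a - 1, by omega⟩) (b := ⟨b - 1, by omega⟩)
      (show a - 1 < m by omega) (show b - 1 < m by omega) (Fin.mk_lt_mk.2 (by omega))
    simp only [g, dif_pos (show a - 1 < n by omega), dif_pos (show b - 1 < n by omega)]
    exact Nat.add_lt_add_right this 1
  have hprefix : (List.ofFn fun i => ((d * z) i : ℕ) + 1).take m =
      (List.ofFn fun i => (zr i : ℕ) + 1).map g := by
    rw [← Fin.ofFn_take_eq_take_ofFn hmn, List.map_ofFn]
    congr 1
    funext i
    have hzi : z (Fin.castLE hmn i) = ⟨zr i, (zr i).isLt.trans_le hmn⟩ :=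
      Fin.ext (hzr _ i.isLt)
    simp [g, Fin.take, hzi, (zr i).isLt.trans_le hmn]
  have hentries : ∀ x ∈ List.ofFn (fun i => (zr i : ℕ) + 1), x ∈ Set.Icc 1 m := by
    simp only [List.mem_ofFn, Set.mem_Icc]
    rintro _ ⟨i, rfl⟩
    exact ⟨by omega, (zr i).isLt⟩
  rw [hprefix, RSKfold_map_snd hg hentries]
  rfl

end MinimalCosetRepresentative

theorem Qtab_restriction_general (n m : ℕ) (hmn : m ≤ n)
    (w d z : Equiv.Perm (Fin n))
    (hw : w = d * z)
    (hd : ∀ z' : Equiv.Perm (Fin n), (∀ i : Fin n, m ≤ (i : ℕ) → z' i = i) →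
      invCount d ≤ invCount (d * z'))
    (zr : Equiv.Perm (Fin m))
    (hzr : ∀ (i : Fin n) (hi : (i : ℕ) < m), (z i : ℕ) = (zr ⟨i, hi⟩ : ℕ)) :
    Qtab zr = restrictTab (Qtab w) m := by
  subst hw
  rw [Qtab_eq_RSKfold_take hmn (strictMonoOn_val_lt_of_invCount_le_mul hd) hzr, Qtab,
    restrictTab_RSKfold_snd (by simpa using hmn)]

/-- restriction property of RSK recording tableaux.  If `w = d·z` with
`z ∈ S_m` and `d` the minimal length representative of the coset `wS_m`, then
`Q(z)` (computed in `S_m`) is `Q(w)` with the boxes containing `m+1,…,n` removed. -/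
theorem Qtab_restriction (n m : ℕ) (hm : 1 ≤ m) (hmn : m ≤ n)
    (w d z : Equiv.Perm (Fin n))
    (hz : ∀ i : Fin n, m ≤ (i : ℕ) → z i = i)
    (hw : w = d * z)
    (hd : ∀ z' : Equiv.Perm (Fin n), (∀ i : Fin n, m ≤ (i : ℕ) → z' i = i) →
      invCount d ≤ invCount (d * z'))
    (zr : Equiv.Perm (Fin m))
    (hzr : ∀ (i : Fin n) (hi : (i : ℕ) < m), (z i : ℕ) = (zr ⟨i, hi⟩ : ℕ)) :
    Qtab zr = restrictTab (Qtab w) m :=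
  Qtab_restriction_general n m hmn w d z hw hd zr hzr
end
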